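/- Let φ: V → W be a linear map, L a Dirac structure on V, and B a skew-symmetric bilinear form on W. Then 𝔉φ(τ_{φ*B}(L)) = τ_B(𝔉φ(L)); that is, the forward image map on Dirac structures is equivariant with respect to gauge transformations. -/

import Mathlib

open Module LinearMap

variable {V W U : Type*} [AddCommGroup V] [Module ℝ V] [FiniteDimensional ℝ V]
  [AddCommGroup W] [Module ℝ W] [FiniteDimensional ℝ W]
  [AddCommGroup U] [Module ℝ U] [FiniteDimensional ℝ U]

/-- The canonical symmetric pairing on `V ⊕ V*`. -/
noncomputable def diracPairing (p q : V × Module.Dual ℝ V) : ℝ := (p.2 q.1 + q.2 p.1) / 2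

/-- A subspace of `V ⊕ V*` is isotropic if the pairing vanishes on it. -/
def IsIsotropic (L : Submodule ℝ (V × Module.Dual ℝ V)) : Prop :=
  ∀ p ∈ L, ∀ q ∈ L, diracPairing p q = 0

/-- A Dirac structure: a maximally isotropic subspace. -/
def IsDirac (L : Submodule ℝ (V × Module.Dual ℝ V)) : Prop :=
  IsIsotropic L ∧ ∀ L' : Submodule ℝ (V × Module.Dual ℝ V), IsIsotropic L' → L ≤ L' → L' = L

/-- The graph of a bivector `π : V* → V`. -/
def graphBiv (π : Module.Dual ℝ V →ₗ[ℝ] V) : Submodule ℝ (V × Module.Dual ℝ V) where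
  carrier := {p | p.1 = π p.2}
  add_mem' := by
    intro a b ha hb
    simp only [Set.mem_setOf_eq, Prod.fst_add, Prod.snd_add, map_add] at *
    rw [ha, hb]
  zero_mem' := by simp
  smul_mem' := by
    intro c a ha
    simp only [Set.mem_setOf_eq, Prod.smul_fst, Prod.smul_snd, map_smul] at *
    rw [ha]

/-- Forward image of a Dirac structure along a linear map. -/
def Fwd (φ : V →ₗ[ℝ] W) (L : Submodule ℝ (V × Module.Dual ℝ V)) :
    Submodule ℝ (W × Module.Dual ℝ W) where
  carrier := {q | ∃ x : V, q.1 = φ x ∧ (x, φ.dualMap q.2) ∈ L}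
  add_mem' := by
    rintro a b ⟨x, hx, hxL⟩ ⟨y, hy, hyL⟩
    refine ⟨x + y, ?_, ?_⟩
    · simp [Prod.fst_add, hx, hy]
    · simpa [Prod.snd_add, Prod.mk_add_mk] using L.add_mem hxL hyL
  zero_mem' := ⟨0, by simp, by convert L.zero_mem using 1; ext <;> simp⟩
  smul_mem' := by
    rintro c a ⟨x, hx, hxL⟩
    refine ⟨c • x, ?_, ?_⟩
    · simp [Prod.smul_fst, hx]
    · simpa [Prod.smul_snd, Prod.smul_mk] using L.smul_mem c hxL

/-- Backward image of a Dirac structure along a linear map. -/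
def Bwd (φ : V →ₗ[ℝ] W) (L : Submodule ℝ (W × Module.Dual ℝ W)) :
    Submodule ℝ (V × Module.Dual ℝ V) where
  carrier := {p | ∃ η : Module.Dual ℝ W, p.2 = φ.dualMap η ∧ (φ p.1, η) ∈ L}
  add_mem' := by
    rintro a b ⟨x, hx, hxL⟩ ⟨y, hy, hyL⟩
    refine ⟨x + y, ?_, ?_⟩
    · simp [Prod.snd_add, hx, hy]
    · simpa [Prod.fst_add, Prod.mk_add_mk] using L.add_mem hxL hyL
  zero_mem' := ⟨0, by simp, by convert L.zero_mem using 1; ext <;> simp⟩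
  smul_mem' := by
    rintro c a ⟨x, hx, hxL⟩
    refine ⟨c • x, ?_, ?_⟩
    · simp [Prod.smul_snd, hx]
    · simpa [Prod.smul_fst, Prod.smul_mk] using L.smul_mem c hxL

/-- Gauge transformation of a Dirac structure by a 2-form `B : V → V*`. -/
def tau (B : V →ₗ[ℝ] Module.Dual ℝ V) (L : Submodule ℝ (V × Module.Dual ℝ V)) :
    Submodule ℝ (V × Module.Dual ℝ V) where
  carrier := {p | (p.1, p.2 - B p.1) ∈ L}
  add_mem' := by
    intro a b ha hb
    have := L.add_mem ha hb
    simpa [Prod.mk_add_mk, Prod.fst_add, Prod.snd_add, map_add, add_sub_add_comm] using this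
  zero_mem' := by show (_, _) ∈ L; convert L.zero_mem using 1; ext <;> simp
  smul_mem' := by
    intro c a ha
    have := L.smul_mem c ha
    simpa [Prod.smul_mk, Prod.smul_fst, Prod.smul_snd, smul_sub] using this

/-- Orthogonal of a subspace with respect to a bilinear form `Ω : V → V*`. -/
def orth (Ω : V →ₗ[ℝ] Module.Dual ℝ V) (S : Submodule ℝ V) : Submodule ℝ V where
  carrier := {x | ∀ y ∈ S, Ω x y = 0}
  add_mem' := by
    intro a b ha hb y hy
    simp [map_add, ha y hy, hb y hy]
  zero_mem' := by simp
  smul_mem' := by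
    intro c a ha y hy
    simp [ha y hy]

/-- Pullback of a 2-form along a linear map. -/
def pb (φ : V →ₗ[ℝ] W) (B : W →ₗ[ℝ] Module.Dual ℝ W) : V →ₗ[ℝ] Module.Dual ℝ V :=
  φ.dualMap ∘ₗ B ∘ₗ φ

/-- The Dirac structure associated to a pair `(R, Ω)` of a subspace and a skew form on it. -/
def diracOfForm (R : Submodule ℝ V) (Ω : R →ₗ[ℝ] Module.Dual ℝ R) :
    Submodule ℝ (V × Module.Dual ℝ V) where
  carrier := {p | ∃ hx : p.1 ∈ R, ∀ y : R, p.2 y = Ω ⟨p.1, hx⟩ y}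
  add_mem' := by
    rintro a b ⟨ha, Ha⟩ ⟨hb, Hb⟩
    refine ⟨R.add_mem ha hb, fun y => ?_⟩
    have h : (⟨(a + b).1, R.add_mem ha hb⟩ : R) = ⟨a.1, ha⟩ + ⟨b.1, hb⟩ := rfl
    rw [h, map_add]
    simp [Prod.snd_add, Ha y, Hb y]
  zero_mem' := by
    refine ⟨R.zero_mem, fun y => ?_⟩
    have h : (⟨((0 : V × Module.Dual ℝ V)).1, R.zero_mem⟩ : R) = 0 := rfl
    rw [h, map_zero]
    rfl
  smul_mem' := by
    rintro c a ⟨ha, Ha⟩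
    refine ⟨R.smul_mem c ha, fun y => ?_⟩
    have h : (⟨(c • a).1, R.smul_mem c ha⟩ : R) = c • ⟨a.1, ha⟩ := rfl
    rw [h, map_smul]
    simp [Prod.smul_snd, Ha y]

omit [FiniteDimensional ℝ V] [FiniteDimensional ℝ W] in
theorem pb_apply (φ : V →ₗ[ℝ] W) (B : W →ₗ[ℝ] Module.Dual ℝ W) (x : V) :
    pb φ B x = φ.dualMap (B (φ x)) :=
  rfl

omit [FiniteDimensional ℝ V] in
theorem mem_tau {B : V →ₗ[ℝ] Module.Dual ℝ V} {L : Submodule ℝ (V × Module.Dual ℝ V)}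
    {p : V × Module.Dual ℝ V} : p ∈ tau B L ↔ (p.1, p.2 - B p.1) ∈ L :=
  Iff.rfl

omit [FiniteDimensional ℝ V] [FiniteDimensional ℝ W] in
theorem mem_Fwd {φ : V →ₗ[ℝ] W} {L : Submodule ℝ (V × Module.Dual ℝ V)}
    {q : W × Module.Dual ℝ W} : q ∈ Fwd φ L ↔ ∃ x : V, q.1 = φ x ∧ (x, φ.dualMap q.2) ∈ L :=
  Iff.rfl

theorem stmt_14_general (φ : V →ₗ[ℝ] W) (B : W →ₗ[ℝ] Module.Dual ℝ W)
    (L : Submodule ℝ (V × Module.Dual ℝ V)) :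
    Fwd φ (tau (pb φ B) L) = tau B (Fwd φ L) := by
  ext ⟨w, η⟩
  simp only [mem_Fwd, mem_tau]
  refine exists_congr fun x => and_congr_right fun hw => ?_
  rw [hw, map_sub, pb_apply]

/-- The forward image map is equivariant with respect to gauge
transformations: `𝔉φ(τ_{φ*B}(L)) = τ_B(𝔉φ(L))`. -/
theorem stmt_14 (φ : V →ₗ[ℝ] W) (B : W →ₗ[ℝ] Module.Dual ℝ W)
    (hB : ∀ x y : W, B x y = - B y x)
    (L : Submodule ℝ (V × Module.Dual ℝ V)) (hL : IsDirac L) :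
    Fwd φ (tau (pb φ B) L) = tau B (Fwd φ L) :=
  stmt_14_general φ B L
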